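/- arXiv:1001.1813 — 2 statements merged into one kernel-verified Lean document; each statement's English description precedes it below -/
import Mathlib

section
/- The map x_i = ζ_i, x̄_i = ζ̄_i for 1 ≤ i ≤ n−2, x_{n−1} = ζ_{n−1} + ζ̄_n, x_n = ζ_n − ζ̄_n, x̄_{n−1} = ζ̄_{n−1} + ζ̄_n is a bijection from B_l to B'_l, with inverse given by ζ_n = max(0, x_n), ζ̄_n = max(0, −x_n), ζ_{n−1} = x_{n−1} + min(0, x_n), ζ̄_{n−1} = x̄_{n−1} + min(0, x_n), ζ_i = x_i, ζ̄_i = x̄_i for 1 ≤ i ≤ n−2. -/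
open Finset

/-- Membership in the crystal `B_l` of type `D_n^{(1)}`: coordinates
`ζ_1,…,ζ_n, ζ̄_n,…,ζ̄_1` are nonnegative integers summing to `l` with `ζ_n ζ̄_n = 0`. -/
def memB (n l : ℕ) (z zb : ℕ → ℤ) : Prop :=
  (∀ i, 1 ≤ i → i ≤ n → 0 ≤ z i ∧ 0 ≤ zb i) ∧
  (∑ i ∈ Finset.Icc 1 n, (z i + zb i)) = (l : ℤ) ∧
  z n * zb n = 0

/-- Membership in the set `B'_l`: coordinates `x_1,…,x_n, x̄_{n-1},…,x̄_1`. -/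
def memB' (n l : ℕ) (x xb : ℕ → ℤ) : Prop :=
  (∀ i, 1 ≤ i → i ≤ n - 1 → 0 ≤ x i ∧ 0 ≤ xb i) ∧
  (-(min (x (n - 1)) (xb (n - 1))) ≤ x n) ∧
  (∑ i ∈ Finset.Icc 1 (n - 1), (x i + xb i)) + x n = (l : ℤ)

/-- Forward map `B_l → B'_l`, the `x`-coordinates. -/
def fwdX (n : ℕ) (z zb : ℕ → ℤ) : ℕ → ℤ := fun i =>
  if i = n - 1 then z (n - 1) + zb n
  else if i = n then z n - zb n
  else z i

/-- Forward map `B_l → B'_l`, the `x̄`-coordinates. -/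
def fwdXb (n : ℕ) (z zb : ℕ → ℤ) : ℕ → ℤ := fun i =>
  if i = n - 1 then zb (n - 1) + zb n else zb i

/-- Inverse map `B'_l → B_l`, the `ζ`-coordinates. -/
def bwdZ (n : ℕ) (x xb : ℕ → ℤ) : ℕ → ℤ := fun i =>
  if i = n then max 0 (x n)
  else if i = n - 1 then x (n - 1) + min 0 (x n)
  else x i

/-- Inverse map `B'_l → B_l`, the `ζ̄`-coordinates. -/
def bwdZb (n : ℕ) (x xb : ℕ → ℤ) : ℕ → ℤ := fun i =>
  if i = n then max 0 (-(x n))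
  else if i = n - 1 then xb (n - 1) + min 0 (x n)
  else xb i

/-!
The maps only touch the coordinates `n - 1` and `n`. Going forward, `ζ_n ζ̄_n = 0` makes
`x_n = ζ_n - ζ̄_n` determine both `ζ_n = max 0 x_n` and `ζ̄_n = max 0 (-x_n)`, and the mass
`ζ̄_n` moved into `x_{n-1}` and `x̄_{n-1}` is recovered as `-min 0 x_n`. Going back, the identities
`max 0 a - max 0 (-a) = a` and `min 0 a + max 0 (-a) = 0` undo the change, and the lower bound
`x_n ≥ -min x_{n-1} x̄_{n-1}` is exactly what keeps `ζ_{n-1}` and `ζ̄_{n-1}` nonnegative.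
-/

theorem Finset.sum_eq_sum_add_sub_of_eq_off {ι M : Type*} [AddCommGroup M] {s : Finset ι}
    {k : ι} (hk : k ∈ s) {f g : ι → M} (h : ∀ i ∈ s, i ≠ k → f i = g i) :
    ∑ i ∈ s, f i = ∑ i ∈ s, g i + (f k - g k) := by
  rw [← sub_eq_iff_eq_add', ← Finset.sum_sub_distrib]
  exact Finset.sum_eq_single_of_mem k hk fun i hi hik => sub_eq_zero.mpr (h i hi hik)

theorem sum_Icc_one_eq_sum_Icc_pred_add {M : Type*} [AddCommMonoid M] {n : ℕ} (hn : 1 ≤ n)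
    (f : ℕ → M) : ∑ i ∈ Icc 1 n, f i = ∑ i ∈ Icc 1 (n - 1), f i + f n := by
  obtain ⟨m, rfl⟩ := Nat.exists_eq_add_of_le' hn
  rw [Finset.sum_Icc_succ_top (by omega), Nat.add_sub_cancel]

theorem pred_mem_Icc_one_pred {n : ℕ} (hn : 2 ≤ n) : n - 1 ∈ Icc 1 (n - 1) :=
  Finset.mem_Icc.mpr ⟨by omega, le_rfl⟩

section Coordinates

variable {n : ℕ} {z zb x xb : ℕ → ℤ} {i : ℕ}

theorem fwdX_pred : fwdX n z zb (n - 1) = z (n - 1) + zb n := if_pos rfl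

theorem fwdX_self (hn : 1 ≤ n) : fwdX n z zb n = z n - zb n := by
  simp [fwdX, show n ≠ n - 1 by omega]

theorem fwdX_of_ne (h₁ : i ≠ n - 1) (h₂ : i ≠ n) : fwdX n z zb i = z i := by
  simp [fwdX, h₁, h₂]

theorem fwdXb_pred : fwdXb n z zb (n - 1) = zb (n - 1) + zb n := if_pos rfl

theorem fwdXb_of_ne (h : i ≠ n - 1) : fwdXb n z zb i = zb i := if_neg h

theorem bwdZ_self : bwdZ n x xb n = max 0 (x n) := if_pos rfl

theorem bwdZ_pred (hn : 1 ≤ n) : bwdZ n x xb (n - 1) = x (n - 1) + min 0 (x n) := by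
  simp [bwdZ, show n - 1 ≠ n by omega]

theorem bwdZ_of_ne (h₁ : i ≠ n - 1) (h₂ : i ≠ n) : bwdZ n x xb i = x i := by
  simp [bwdZ, h₁, h₂]

theorem bwdZb_self : bwdZb n x xb n = max 0 (-x n) := if_pos rfl

theorem bwdZb_pred (hn : 1 ≤ n) : bwdZb n x xb (n - 1) = xb (n - 1) + min 0 (x n) := by
  simp [bwdZb, show n - 1 ≠ n by omega]

theorem bwdZb_of_ne (h₁ : i ≠ n - 1) (h₂ : i ≠ n) : bwdZb n x xb i = xb i := by
  simp [bwdZb, h₁, h₂]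

end Coordinates

theorem memB'_fwd {n l : ℕ} (hn : 2 ≤ n) {z zb : ℕ → ℤ} (h : memB n l z zb) :
    memB' n l (fwdX n z zb) (fwdXb n z zb) := by
  obtain ⟨hpos, hsum, hprod⟩ := h
  have hzn := hpos n (by omega) le_rfl
  have hzn1 := hpos (n - 1) (by omega) (by omega)
  refine ⟨fun i hi₁ hi₂ => ?_, ?_, ?_⟩
  · by_cases hi : i = n - 1
    · subst hi
      rw [fwdX_pred, fwdXb_pred]
      constructor <;> omega
    · rw [fwdX_of_ne hi (by omega), fwdXb_of_ne hi]
      exact hpos i hi₁ (by omega)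
  · rw [fwdX_pred, fwdXb_pred, fwdX_self (by omega)]
    omega
  · have hshift : ∑ i ∈ Icc 1 (n - 1), (fwdX n z zb i + fwdXb n z zb i)
        = ∑ i ∈ Icc 1 (n - 1), (z i + zb i) + 2 * zb n := by
      rw [Finset.sum_eq_sum_add_sub_of_eq_off (pred_mem_Icc_one_pred hn) fun i hi hi' => by
        rw [fwdX_of_ne hi' (by simp at hi; omega), fwdXb_of_ne hi'], fwdX_pred, fwdXb_pred]
      ring
    rw [sum_Icc_one_eq_sum_Icc_pred_add (by omega)] at hsum
    rw [hshift, fwdX_self (by omega)]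
    omega

theorem bwd_fwd {n : ℕ} (hn : 1 ≤ n) {z zb : ℕ → ℤ} (hz : 0 ≤ z n) (hzb : 0 ≤ zb n)
    (hprod : z n * zb n = 0) (i : ℕ) :
    bwdZ n (fwdX n z zb) (fwdXb n z zb) i = z i ∧
      bwdZb n (fwdX n z zb) (fwdXb n z zb) i = zb i := by
  have hzero : z n = 0 ∨ zb n = 0 := mul_eq_zero.mp hprod
  by_cases hin : i = n
  · subst hin
    rw [bwdZ_self, bwdZb_self, fwdX_self hn]
    constructor <;> omega
  by_cases hi : i = n - 1
  · subst hi
    rw [bwdZ_pred hn, bwdZb_pred hn, fwdX_pred, fwdXb_pred, fwdX_self hn]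
    constructor <;> omega
  · rw [bwdZ_of_ne hi hin, bwdZb_of_ne hi hin, fwdX_of_ne hi hin, fwdXb_of_ne hi]
    exact ⟨rfl, rfl⟩

theorem memB_bwd {n l : ℕ} (hn : 2 ≤ n) {x xb : ℕ → ℤ} (h : memB' n l x xb) :
    memB n l (bwdZ n x xb) (bwdZb n x xb) := by
  obtain ⟨hpos, hmin, hsum⟩ := h
  have hxn1 := hpos (n - 1) (by omega) le_rfl
  refine ⟨fun i hi₁ hi₂ => ?_, ?_, ?_⟩
  · by_cases hin : i = n
    · subst hin
      rw [bwdZ_self, bwdZb_self]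
      exact ⟨le_max_left _ _, le_max_left _ _⟩
    by_cases hi : i = n - 1
    · subst hi
      rw [bwdZ_pred (by omega), bwdZb_pred (by omega)]
      constructor <;> omega
    · rw [bwdZ_of_ne hi hin, bwdZb_of_ne hi hin]
      exact hpos i hi₁ (by omega)
  · have hshift : ∑ i ∈ Icc 1 (n - 1), (bwdZ n x xb i + bwdZb n x xb i)
        = ∑ i ∈ Icc 1 (n - 1), (x i + xb i) + 2 * min 0 (x n) := by
      rw [Finset.sum_eq_sum_add_sub_of_eq_off (pred_mem_Icc_one_pred hn) fun i hi hi' => by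
          have hin : i ≠ n := by simp at hi; omega
          rw [bwdZ_of_ne hi' hin, bwdZb_of_ne hi' hin],
        bwdZ_pred (by omega), bwdZb_pred (by omega)]
      ring
    rw [sum_Icc_one_eq_sum_Icc_pred_add (by omega), hshift, bwdZ_self, bwdZb_self]
    omega
  · rw [bwdZ_self, bwdZb_self]
    rcases le_total 0 (x n) with h | h
    · rw [max_eq_left (neg_nonpos.mpr h), mul_zero]
    · rw [max_eq_left h, zero_mul]

theorem fwdX_bwd {n : ℕ} (hn : 1 ≤ n) (x xb : ℕ → ℤ) (i : ℕ) :
    fwdX n (bwdZ n x xb) (bwdZb n x xb) i = x i := by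
  by_cases hin : i = n
  · subst hin
    rw [fwdX_self hn, bwdZ_self, bwdZb_self]
    omega
  by_cases hi : i = n - 1
  · subst hi
    rw [fwdX_pred, bwdZ_pred hn, bwdZb_self]
    omega
  · rw [fwdX_of_ne hi hin, bwdZ_of_ne hi hin]

theorem fwdXb_bwd {n : ℕ} (hn : 1 ≤ n) (x xb : ℕ → ℤ) {i : ℕ} (hin : i ≠ n) :
    fwdXb n (bwdZ n x xb) (bwdZb n x xb) i = xb i := by
  by_cases hi : i = n - 1
  · subst hi
    rw [fwdXb_pred, bwdZb_pred hn, bwdZb_self]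
    omega
  · rw [fwdXb_of_ne hi, bwdZb_of_ne hi hin]

theorem stmt0_general (n l : ℕ) (hn : 3 ≤ n) :
    (∀ z zb : ℕ → ℤ, memB n l z zb →
      memB' n l (fwdX n z zb) (fwdXb n z zb) ∧
      (∀ i, 1 ≤ i → i ≤ n →
        bwdZ n (fwdX n z zb) (fwdXb n z zb) i = z i ∧
        bwdZb n (fwdX n z zb) (fwdXb n z zb) i = zb i)) ∧
    (∀ x xb : ℕ → ℤ, memB' n l x xb →
      memB n l (bwdZ n x xb) (bwdZb n x xb) ∧
      (∀ i, 1 ≤ i → i ≤ n →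
        fwdX n (bwdZ n x xb) (bwdZb n x xb) i = x i) ∧
      (∀ i, 1 ≤ i → i ≤ n - 1 →
        fwdXb n (bwdZ n x xb) (bwdZb n x xb) i = xb i)) := by
  refine ⟨fun z zb h => ⟨memB'_fwd (by omega) h, fun i _ _ => ?_⟩,
    fun x xb h => ⟨memB_bwd (by omega) h, fun i _ _ => fwdX_bwd (by omega) x xb i,
      fun i _ hi => fwdXb_bwd (by omega) x xb (by omega)⟩⟩
  obtain ⟨hpos, -, hprod⟩ := h
  obtain ⟨hz, hzb⟩ := hpos n (by omega) le_rfl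
  exact bwd_fwd (by omega) hz hzb hprod i

/-- The coordinate change (\ref{xz4})-(\ref{xz5}) is a bijection `B_l → B'_l`
with inverse (\ref{xz6})-(\ref{xz7}). -/
theorem stmt0 (n l : ℕ) (hn : 3 ≤ n) (hl : 1 ≤ l) :
    (∀ z zb : ℕ → ℤ, memB n l z zb →
      memB' n l (fwdX n z zb) (fwdXb n z zb) ∧
      (∀ i, 1 ≤ i → i ≤ n →
        bwdZ n (fwdX n z zb) (fwdXb n z zb) i = z i ∧
        bwdZb n (fwdX n z zb) (fwdXb n z zb) i = zb i)) ∧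
    (∀ x xb : ℕ → ℤ, memB' n l x xb →
      memB n l (bwdZ n x xb) (bwdZb n x xb) ∧
      (∀ i, 1 ≤ i → i ≤ n →
        fwdX n (bwdZ n x xb) (bwdZb n x xb) i = x i) ∧
      (∀ i, 1 ≤ i → i ≤ n - 1 →
        fwdXb n (bwdZ n x xb) (bwdZb n x xb) i = xb i)) :=
  stmt0_general n l hn
end

section
/- Suppose for each k ∈ {1,…,L} and each label g the increments δρ_g = ρ_g(p_{[k]}) − ρ_g(p_{[k−1]}) are given by the counting-function formulas ρ_{v_a} = Σ(ζ_2+…+ζ_n+ζ̄_n+…+ζ̄_{a+1}+ζ̄_1) for 0 ≤ a ≤ n−2, ρ_{v_{n−1}} = Σ(ζ_2+…+ζ_{n−1}+ζ_n+ζ̄_1), ρ_{v^∗_{n−1}} = Σ(ζ_2+…+ζ_{n−1}+ζ̄_n+ζ̄_1), ρ_{w_a−v_a} = Σ(ζ_2+…+ζ_a+ζ̄_1) for 1 ≤ a ≤ n−2, all evaluated on the components of p_{[k]}, plus a common term independent of the label. Then the local state p_k = (ζ_1,…,ζ_n, ζ̄_n,…,ζ̄_1) ∈ B_{l_k} is reproduced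 by: ζ_1 = l_k − δρ_{v_0} + δρ_{w_1−v_1}; ζ_a = δρ_{w_a−v_a} − δρ_{w_{a−1}−v_{a−1}} for 2 ≤ a ≤ n−2; ζ_{n−1} = min(δρ_{v_{n−1}}, δρ_{v^∗_{n−1}}) − δρ_{w_{n−2}−v_{n−2}}; ζ_n = max(δρ_{v_{n−1}} − δρ_{v^∗_{n−1}}, 0); ζ̄_n = max(δρ_{v^∗_{n−1}} − δρ_{v_{n−1}}, 0); ζ̄_{n−1} = −max(δρ_{v_{n−1}}, δρ_{v^∗_{n−1}}) + δρ_{v_{n−2}}; ζ̄_a = δρ_{v_{a−1}} − δρ_{v_a} for 1 ≤ a ≤ n−2. -/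
/-!
Each counting function `γ_g` is a partial sum of the entries of `p_k`, so differences of
consecutive ones isolate single entries and the common term cancels; `ζ_1` is recovered from
the total weight `l`. The only nonlinearity sits at `ζ_n, ζ̄_n`: since both are nonnegative
with `ζ_n ζ̄_n = 0`, their minimum is `0` and their maximum is `ζ_n + ζ̄_n`.
-/

open Finset

/-- `γ_{v_a}(ζ) = ζ_2 + ⋯ + ζ_n + ζ̄_n + ⋯ + ζ̄_{a+1} + ζ̄_1` for `0 ≤ a ≤ n-2`. -/
def gv (n a : ℕ) (z zb : ℕ → ℤ) : ℤ :=
  (∑ i ∈ Finset.Icc 2 n, z i) + (∑ i ∈ Finset.Icc (a + 1) n, zb i) + zb 1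

/-- `γ_{v_{n-1}}(ζ) = ζ_2 + ⋯ + ζ_{n-1} + ζ_n + ζ̄_1`. -/
def gvn (n : ℕ) (z zb : ℕ → ℤ) : ℤ :=
  (∑ i ∈ Finset.Icc 2 n, z i) + zb 1

/-- `γ_{v^∗_{n-1}}(ζ) = ζ_2 + ⋯ + ζ_{n-1} + ζ̄_n + ζ̄_1`. -/
def gvns (n : ℕ) (z zb : ℕ → ℤ) : ℤ :=
  (∑ i ∈ Finset.Icc 2 (n - 1), z i) + zb n + zb 1

/-- `γ_{w_a - v_a}(ζ) = ζ_2 + ⋯ + ζ_a + ζ̄_1` for `1 ≤ a ≤ n-2`. -/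
def gwv (a : ℕ) (z zb : ℕ → ℤ) : ℤ :=
  (∑ i ∈ Finset.Icc 2 a, z i) + zb 1

section

variable {α : Type*} [LinearOrder α] {x y : α}

lemma min_eq_zero_of_eq_zero_or_eq_zero [Zero α] (hx : 0 ≤ x) (hy : 0 ≤ y) (h : x = 0 ∨ y = 0) :
    min x y = 0 := by
  rcases h with rfl | rfl
  exacts [min_eq_left hy, min_eq_right hx]

lemma max_eq_add_of_eq_zero_or_eq_zero [AddZeroClass α] (hx : 0 ≤ x) (hy : 0 ≤ y)
    (h : x = 0 ∨ y = 0) : max x y = x + y := by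
  rcases h with rfl | rfl
  · rw [max_eq_right hy, zero_add]
  · rw [max_eq_left hx, add_zero]

lemma max_sub_zero_of_eq_zero_or_eq_zero [AddCommGroup α] [IsOrderedAddMonoid α] (hx : 0 ≤ x)
    (hy : 0 ≤ y) (h : x = 0 ∨ y = 0) : max (x - y) 0 = x := by
  rcases h with rfl | rfl
  · rw [zero_sub, max_eq_right (neg_nonpos.mpr hy)]
  · rw [sub_zero, max_eq_left hx]

end

section

variable {n a : ℕ} (z zb : ℕ → ℤ)

lemma gwv_one : gwv 1 z zb = zb 1 := by
  simp [gwv]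

lemma gwv_eq_gwv_pred_add (ha : 2 ≤ a) : gwv a z zb = gwv (a - 1) z zb + z a := by
  have hsum := Finset.sum_Icc_succ_top (show 2 ≤ a - 1 + 1 by omega) z
  rw [Nat.sub_add_cancel (by omega : 1 ≤ a)] at hsum
  rw [gwv, gwv, hsum]
  ring

lemma gvn_eq_gwv : gvn n z zb = gwv n z zb := rfl

lemma gvns_eq_gwv_pred_add : gvns n z zb = gwv (n - 1) z zb + zb n := by
  rw [gvns, gwv]
  ring

lemma gv_pred_eq_gv_add (ha : 1 ≤ a) (han : a ≤ n) :
    gv n (a - 1) z zb = gv n a z zb + zb a := by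
  rw [gv, gv, Nat.sub_add_cancel ha, ← add_sum_Ioc_eq_sum_Icc han, ← Icc_add_one_left_eq_Ioc]
  ring

lemma gv_self : gv n n z zb = gvn n z zb := by
  simp [gv, gvn]

lemma gv_sub_two (hn : 2 ≤ n) : gv n (n - 2) z zb = gvn n z zb + zb (n - 1) + zb n := by
  rw [show n - 2 = n - 1 - 1 by omega, gv_pred_eq_gv_add z zb (by omega) (by omega),
    gv_pred_eq_gv_add z zb (by omega) le_rfl, gv_self]
  ring

lemma sum_Icc_one_add_eq_gv_zero (hn : 1 ≤ n) :
    ∑ i ∈ Icc 1 n, (z i + zb i) = z 1 - zb 1 + gv n 0 z zb := by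
  rw [gv, zero_add, sum_add_distrib, ← add_sum_Ioc_eq_sum_Icc hn (f := z),
    ← Icc_add_one_left_eq_Ioc, one_add_one_eq_two]
  ring

end

/-- If the increments `δρ_g` of the counting functions equal `γ_g(p_k)` plus a
common term `c` independent of the label `g`, then the local state
`p_k ∈ B_{l_k}` is reproduced by the stated piecewise linear formulas. -/
theorem stmt7 (n l : ℕ) (hn : 3 ≤ n) (z zb : ℕ → ℤ) (hmem : memB n l z zb)
    (c : ℤ) (dv dwv : ℕ → ℤ) (dvn dvs : ℤ)
    (hdv : ∀ a, a ≤ n - 2 → dv a = gv n a z zb + c)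
    (hdvn : dvn = gvn n z zb + c)
    (hdvs : dvs = gvns n z zb + c)
    (hdwv : ∀ a, 1 ≤ a → a ≤ n - 2 → dwv a = gwv a z zb + c) :
    z 1 = (l : ℤ) - dv 0 + dwv 1 ∧
    (∀ a, 2 ≤ a → a ≤ n - 2 → z a = dwv a - dwv (a - 1)) ∧
    z (n - 1) = min dvn dvs - dwv (n - 2) ∧
    z n = max (dvn - dvs) 0 ∧
    zb n = max (dvs - dvn) 0 ∧
    zb (n - 1) = -(max dvn dvs) + dv (n - 2) ∧
    (∀ a, 1 ≤ a → a ≤ n - 2 → zb a = dv (a - 1) - dv a) := by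
  obtain ⟨hnonneg, hsum, hprod⟩ := hmem
  obtain ⟨hzn, hzbn⟩ := hnonneg n (by omega) le_rfl
  have hzero := mul_eq_zero.mp hprod
  have hdvn' : dvn = gwv (n - 1) z zb + c + z n := by
    rw [hdvn, gvn_eq_gwv, gwv_eq_gwv_pred_add z zb (by omega)]
    ring
  have hdvs' : dvs = gwv (n - 1) z zb + c + zb n := by
    rw [hdvs, gvns_eq_gwv_pred_add]
    ring
  have hdwv_top : dwv (n - 2) = gwv (n - 1) z zb + c - z (n - 1) := by
    rw [hdwv (n - 2) (by omega) le_rfl, gwv_eq_gwv_pred_add z zb (a := n - 1) (by omega),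
      show n - 1 - 1 = n - 2 by omega]
    ring
  refine ⟨?_, ?_, ?_, ?_, ?_, ?_, ?_⟩
  · rw [hdv 0 (by omega), hdwv 1 le_rfl (by omega), gwv_one, ← hsum,
      sum_Icc_one_add_eq_gv_zero z zb (by omega)]
    ring
  · intro a ha2 han
    rw [hdwv a (by omega) han, hdwv (a - 1) (by omega) (by omega), gwv_eq_gwv_pred_add z zb ha2]
    ring
  · rw [hdvn', hdvs', min_add_add_left, min_eq_zero_of_eq_zero_or_eq_zero hzn hzbn hzero,
      hdwv_top]
    ring
  · rw [hdvn', hdvs', add_sub_add_left_eq_sub, max_sub_zero_of_eq_zero_or_eq_zero hzn hzbn hzero]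
  · rw [hdvn', hdvs', add_sub_add_left_eq_sub,
      max_sub_zero_of_eq_zero_or_eq_zero hzbn hzn hzero.symm]
  · rw [hdvn', hdvs', max_add_add_left, max_eq_add_of_eq_zero_or_eq_zero hzn hzbn hzero,
      hdv (n - 2) le_rfl, gv_sub_two z zb (by omega), gvn_eq_gwv,
      gwv_eq_gwv_pred_add z zb (a := n) (by omega)]
    ring
  · intro a ha1 han
    rw [hdv a han, hdv (a - 1) (by omega), gv_pred_eq_gv_add z zb ha1 (by omega)]
    ring
end
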